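/- arXiv:2408.03792 — 2 statements merged into one kernel-verified Lean document; each statement's English description precedes it below -/
import Mathlib

section
/- The coefficient sequence (in each variable separately) of the polynomial (x2+1)^{m1} · (x1+x2+1)^{m2} in Z[x1,x2] is log-concave: writing the polynomial as ∑ a_{k,l} x1^k x2^l with a_{k,l} ≥ 0, one has a_{k,l}^2 ≥ a_{k-1,l}·a_{k+1,l} and a_{k,l}^2 ≥ a_{k,l-1}·a_{k,l+1} for all k,l. -/
/-- The Laurent monomial with exponent vector `d` and coefficient `1`,
as an element of the ring of multivariate Laurent polynomials
(the add-monoid algebra of `ℤ` over the group of exponent vectors). -/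
noncomputable def Lmon (m : ℕ) (d : Fin m →₀ ℤ) : AddMonoidAlgebra ℤ (Fin m →₀ ℤ) :=
  AddMonoidAlgebra.single d 1

/-- The Laurent monomial `xᵢ^e`. -/
noncomputable def LX (m : ℕ) (i : Fin m) (e : ℤ) : AddMonoidAlgebra ℤ (Fin m →₀ ℤ) :=
  Lmon m (Finsupp.single i e)

/-- A multivariate Laurent polynomial is log-concave if its coefficients are
nonnegative and, in each variable separately, the square of every coefficient is
at least the product of its two neighboring coefficients. -/
def IsLogConcave {m : ℕ} (f : AddMonoidAlgebra ℤ (Fin m →₀ ℤ)) : Prop :=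
  (∀ d, 0 ≤ f.coeff d) ∧
  ∀ (j : Fin m) (d : Fin m →₀ ℤ),
    f.coeff (d - Finsupp.single j 1) * f.coeff (d + Finsupp.single j 1) ≤ (f.coeff d) ^ 2

open Finset AddMonoidAlgebra

/-!
Expanding `(x₂ + 1)^m₁ (x₁ + (x₂ + 1))^m₂` binomially twice shows that the coefficient of
`x₁^k x₂^l` is `C(m₂, k) · C(m₁ + m₂ - k, l)`. Binomial coefficients are log-concave in the
lower index (`l ↦ C(n, l)`) and in the upper index (`n ↦ C(n, l)`), and a product of
nonnegative log-concave sequences is log-concave. Along `x₂` only the second factor moves;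
along `x₁` both move, the second one through its upper index.
-/

namespace Nat

theorem choose_mul_choose_add_two_le_sq (n k : ℕ) :
    n.choose k * n.choose (k + 2) ≤ n.choose (k + 1) ^ 2 := by
  rcases lt_or_ge n (k + 2) with h | h
  · simp [choose_eq_zero_of_lt h]
  have h₁ := choose_succ_right_eq n k
  have h₂ := choose_succ_right_eq n (k + 1)
  have key : n.choose k * n.choose (k + 2) * ((k + 2) * (n - k)) =
      n.choose (k + 1) ^ 2 * ((k + 1) * (n - (k + 1))) := by
    calc _ = n.choose k * (n - k) * (n.choose (k + 2) * (k + 2)) := by ring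
      _ = _ := by rw [← h₁, h₂]; ring
  refine le_of_mul_le_mul_right (a := (k + 2) * (n - k)) ?_ (Nat.mul_pos (by omega) (by omega))
  rw [key]
  exact Nat.mul_le_mul_left _ (Nat.mul_le_mul (by omega) (by omega))

theorem choose_mul_add_two_choose_le_sq (n k : ℕ) :
    n.choose k * (n + 2).choose k ≤ (n + 1).choose k ^ 2 := by
  rcases lt_or_ge n k with h | h
  · simp [choose_eq_zero_of_lt h]
  have h₁ := choose_mul_succ_eq n k
  have h₂ := choose_mul_succ_eq (n + 1) k
  have key : n.choose k * (n + 2).choose k * ((n + 1) * (n + 2 - k)) =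
      (n + 1).choose k ^ 2 * ((n + 1 - k) * (n + 2)) := by
    calc _ = n.choose k * (n + 1) * ((n + 2).choose k * (n + 2 - k)) := by ring
      _ = _ := by rw [h₁, ← h₂]; ring
  refine le_of_mul_le_mul_right (a := (n + 1) * (n + 2 - k)) ?_ (Nat.mul_pos (by omega) (by omega))
  rw [key]
  refine Nat.mul_le_mul_left _ ?_
  zify [show k ≤ n + 1 by omega, show k ≤ n + 2 by omega]
  nlinarith

end Nat

def intChoose (n k : ℤ) : ℤ :=
  if 0 ≤ n ∧ 0 ≤ k then n.toNat.choose k.toNat else 0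

@[simp, norm_cast]
theorem intChoose_natCast (n k : ℕ) : intChoose n k = n.choose k := by
  simp [intChoose]

theorem intChoose_of_neg_left {n : ℤ} (hn : n < 0) (k : ℤ) : intChoose n k = 0 :=
  if_neg fun h ↦ by omega

theorem intChoose_of_neg_right (n : ℤ) {k : ℤ} (hk : k < 0) : intChoose n k = 0 :=
  if_neg fun h ↦ by omega

theorem intChoose_nonneg (n k : ℤ) : 0 ≤ intChoose n k := by
  unfold intChoose; split <;> positivity

theorem intChoose_sub_one_right_mul_le_sq (n k : ℤ) :
    intChoose n (k - 1) * intChoose n (k + 1) ≤ intChoose n k ^ 2 := by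
  rcases lt_or_ge n 0 with hn | hn
  · rw [intChoose_of_neg_left hn, zero_mul]; positivity
  rcases lt_or_ge k 1 with hk | hk
  · rw [intChoose_of_neg_right n (show k - 1 < 0 by omega), zero_mul]; positivity
  obtain ⟨N, rfl⟩ := Int.eq_ofNat_of_zero_le hn
  obtain ⟨K, rfl⟩ : ∃ K : ℕ, k = K + 1 := ⟨(k - 1).toNat, by omega⟩
  rw [add_sub_cancel_right, show (K : ℤ) + 1 + 1 = (K + 2 : ℕ) by push_cast; ring]
  exact_mod_cast N.choose_mul_choose_add_two_le_sq K

theorem intChoose_sub_one_left_mul_le_sq (n k : ℤ) :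
    intChoose (n - 1) k * intChoose (n + 1) k ≤ intChoose n k ^ 2 := by
  rcases lt_or_ge n 1 with hn | hn
  · rw [intChoose_of_neg_left (show n - 1 < 0 by omega), zero_mul]; positivity
  rcases lt_or_ge k 0 with hk | hk
  · rw [intChoose_of_neg_right _ hk, zero_mul]; positivity
  obtain ⟨N, rfl⟩ : ∃ N : ℕ, n = N + 1 := ⟨(n - 1).toNat, by omega⟩
  obtain ⟨K, rfl⟩ := Int.eq_ofNat_of_zero_le hk
  rw [add_sub_cancel_right, show (N : ℤ) + 1 + 1 = (N + 2 : ℕ) by push_cast; ring]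
  exact_mod_cast N.choose_mul_add_two_choose_le_sq K

theorem mul_mul_mul_le_sq_of_mul_le_sq {R : Type*} [CommSemiring R] [PartialOrder R]
    [IsOrderedRing R] {a b c p q r : R} (h : a * c ≤ b ^ 2) (h' : p * r ≤ q ^ 2)
    (hac : 0 ≤ a * c) (hpr : 0 ≤ p * r) : a * p * (c * r) ≤ (b * q) ^ 2 :=
  calc a * p * (c * r) = a * c * (p * r) := by ring
    _ ≤ b ^ 2 * q ^ 2 := mul_le_mul h h' hpr (hac.trans h)
    _ = (b * q) ^ 2 := (mul_pow b q 2).symm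

def clusterCoeff (m1 m2 : ℕ) (k l : ℤ) : ℤ :=
  intChoose m2 k * intChoose (m1 + m2 - k) l

theorem clusterCoeff_nonneg (m1 m2 : ℕ) (k l : ℤ) : 0 ≤ clusterCoeff m1 m2 k l :=
  mul_nonneg (intChoose_nonneg _ _) (intChoose_nonneg _ _)

theorem clusterCoeff_sub_one_left_mul_le_sq (m1 m2 : ℕ) (k l : ℤ) :
    clusterCoeff m1 m2 (k - 1) l * clusterCoeff m1 m2 (k + 1) l ≤ clusterCoeff m1 m2 k l ^ 2 := by
  unfold clusterCoeff
  rw [show (m1 + m2 : ℤ) - (k - 1) = m1 + m2 - k + 1 by ring,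
    show (m1 + m2 : ℤ) - (k + 1) = m1 + m2 - k - 1 by ring]
  refine mul_mul_mul_le_sq_of_mul_le_sq (intChoose_sub_one_right_mul_le_sq m2 k) ?_
    (mul_nonneg (intChoose_nonneg _ _) (intChoose_nonneg _ _))
    (mul_nonneg (intChoose_nonneg _ _) (intChoose_nonneg _ _))
  rw [mul_comm]
  exact intChoose_sub_one_left_mul_le_sq _ l

theorem clusterCoeff_sub_one_right_mul_le_sq (m1 m2 : ℕ) (k l : ℤ) :
    clusterCoeff m1 m2 k (l - 1) * clusterCoeff m1 m2 k (l + 1) ≤ clusterCoeff m1 m2 k l ^ 2 :=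
  mul_mul_mul_le_sq_of_mul_le_sq (sq _).ge (intChoose_sub_one_right_mul_le_sq _ l)
    (mul_self_nonneg _) (mul_nonneg (intChoose_nonneg _ _) (intChoose_nonneg _ _))

theorem LX_one_pow (m : ℕ) (i : Fin m) (n : ℕ) :
    LX m i 1 ^ n = single (Finsupp.single i (n : ℤ)) 1 := by
  simp [LX, Lmon, single_pow, Finsupp.smul_single]

theorem LX_add_one_pow (m : ℕ) (i : Fin m) (n : ℕ) :
    (LX m i 1 + 1) ^ n =
      ∑ l ∈ range (n + 1), single (Finsupp.single i (l : ℤ)) (n.choose l : ℤ) := by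
  rw [add_pow]
  refine sum_congr rfl fun l _ ↦ ?_
  rw [one_pow, mul_one, LX_one_pow, natCast_def, single_mul_single, add_zero, one_mul]

theorem LX_cluster_eq_sum (m1 m2 : ℕ) :
    (LX 2 1 1 + 1) ^ m1 * (LX 2 0 1 + LX 2 1 1 + 1) ^ m2 =
      ∑ k ∈ range (m2 + 1), ∑ l ∈ range (m1 + m2 - k + 1),
        single (Finsupp.single 0 (k : ℤ) + Finsupp.single 1 (l : ℤ))
          ((m2.choose k * (m1 + m2 - k).choose l : ℕ) : ℤ) := by
  rw [add_assoc, add_pow (LX 2 0 1), mul_sum]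
  refine sum_congr rfl fun k hk ↦ ?_
  have hk : k ≤ m2 := Nat.lt_succ_iff.mp (mem_range.mp hk)
  calc (LX 2 1 1 + 1) ^ m1 * (LX 2 0 1 ^ k * (LX 2 1 1 + 1) ^ (m2 - k) * (m2.choose k : _))
      = LX 2 0 1 ^ k * (LX 2 1 1 + 1) ^ (m1 + m2 - k) * (m2.choose k : _) := by
        rw [show m1 + m2 - k = m1 + (m2 - k) by omega, pow_add]; ring
    _ = _ := by
      rw [LX_add_one_pow, mul_sum, sum_mul]
      refine sum_congr rfl fun l _ ↦ ?_
      rw [LX_one_pow, natCast_def, single_mul_single, single_mul_single, add_zero, one_mul]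
      push_cast; ring_nf

theorem Finsupp.single_zero_add_single_one_eq_iff {M : Type*} [AddZeroClass M]
    (x y : M) (d : Fin 2 →₀ M) :
    Finsupp.single 0 x + Finsupp.single 1 y = d ↔ x = d 0 ∧ y = d 1 := by
  constructor
  · rintro rfl
    simp
  · rintro ⟨rfl, rfl⟩
    ext i
    fin_cases i <;> simp

theorem coeff_sum_sum_single {R : Type*} [Semiring R] (s : Finset ℕ) (t : ℕ → Finset ℕ)
    (a : ℕ → ℕ → R) (d : Fin 2 →₀ ℤ) :
    (∑ i ∈ s, ∑ j ∈ t i,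
        single (Finsupp.single 0 (i : ℤ) + Finsupp.single 1 (j : ℤ)) (a i j)).coeff d =
      ∑ i ∈ s, ∑ j ∈ t i, if (i : ℤ) = d 0 ∧ (j : ℤ) = d 1 then a i j else 0 := by
  simp only [coeff_sum, Finsupp.coe_finsetSum, Finset.sum_apply, coeff_single,
    Finsupp.single_apply, Finsupp.single_zero_add_single_one_eq_iff]

theorem coeff_LX_cluster (m1 m2 : ℕ) (d : Fin 2 →₀ ℤ) :
    ((LX 2 1 1 + 1) ^ m1 * (LX 2 0 1 + LX 2 1 1 + 1) ^ m2).coeff d =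
      clusterCoeff m1 m2 (d 0) (d 1) := by
  rw [LX_cluster_eq_sum, coeff_sum_sum_single, clusterCoeff]
  rcases lt_or_ge (d 0) 0 with h0 | h0
  · rw [intChoose_of_neg_right _ h0, zero_mul]
    exact sum_eq_zero fun i _ ↦ sum_eq_zero fun j _ ↦ if_neg (by omega)
  rcases lt_or_ge (d 1) 0 with h1 | h1
  · rw [intChoose_of_neg_right _ h1, mul_zero]
    exact sum_eq_zero fun i _ ↦ sum_eq_zero fun j _ ↦ if_neg (by omega)
  obtain ⟨K, hK⟩ := Int.eq_ofNat_of_zero_le h0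
  obtain ⟨L, hL⟩ := Int.eq_ofNat_of_zero_le h1
  simp only [hK, hL, Nat.cast_inj, ite_and, sum_ite_irrel, sum_const_zero, sum_ite_eq',
    mem_range]
  rcases lt_or_ge m2 K with hKm | hKm
  · simp [hKm.not_ge, Nat.choose_eq_zero_of_lt hKm]
  rw [if_pos (by omega), show (m1 : ℤ) + m2 - K = (m1 + m2 - K : ℕ) by omega]
  split_ifs
  · push_cast; rfl
  · simp [Nat.choose_eq_zero_of_lt (show m1 + m2 - K < L by omega)]

/-- The polynomial `(x2+1)^{m1} * (x1+x2+1)^{m2}` is log-concave in each variable. -/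
theorem logConcave_A2_cluster_monomial_poly (m1 m2 : ℕ) :
    IsLogConcave ((LX 2 1 1 + 1) ^ m1 * (LX 2 0 1 + LX 2 1 1 + 1) ^ m2) := by
  refine ⟨fun d ↦ coeff_LX_cluster m1 m2 d ▸ clusterCoeff_nonneg m1 m2 _ _, fun j d ↦ ?_⟩
  simp only [coeff_LX_cluster]
  fin_cases j
  · simpa using clusterCoeff_sub_one_left_mul_le_sq m1 m2 (d 0) (d 1)
  · simpa using clusterCoeff_sub_one_right_mul_le_sq m1 m2 (d 0) (d 1)
end

section
/- The Laurent polynomial (1 + 2·x2 + x2^2 + x1·x3)/(x1·x2·x3) in variables x1, x2, x3 is log-concave. -/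
/-!
Multiplying by a Laurent monomial only shifts exponents, so it preserves log-concavity, and it
suffices to treat the numerator `(1 + x₂)² + x₁x₃`. Its exponents in `x₁` and in `x₃` lie in
`{0, 1}`, so in those directions two neighbours of an exponent vector are never both in the
support; in the `x₂`-direction the only such pair is `1, 1` around the central coefficient `2`.
-/

open AddMonoidAlgebra

lemma Lmon_mul_Lmon {m : ℕ} (u v : Fin m →₀ ℤ) : Lmon m u * Lmon m v = Lmon m (u + v) := by
  simp [Lmon]

lemma coeff_mul_Lmon {m : ℕ} (f : AddMonoidAlgebra ℤ (Fin m →₀ ℤ)) (u d : Fin m →₀ ℤ) :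
    (f * Lmon m u).coeff d = f.coeff (d - u) := by
  simp [Lmon, sub_eq_add_neg]

lemma IsLogConcave.mul_Lmon {m : ℕ} {f : AddMonoidAlgebra ℤ (Fin m →₀ ℤ)} (hf : IsLogConcave f)
    (u : Fin m →₀ ℤ) : IsLogConcave (f * Lmon m u) := by
  refine ⟨fun d ↦ ?_, fun j d ↦ ?_⟩
  · rw [coeff_mul_Lmon]
    exact hf.1 _
  · simp only [coeff_mul_Lmon, sub_right_comm, add_sub_right_comm]
    exact hf.2 j (d - u)

lemma isLogConcave_of_coeff_eq {f : AddMonoidAlgebra ℤ (Fin 3 →₀ ℤ)} (g : ℤ → ℤ → ℤ → ℤ)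
    (hf : ∀ d, f.coeff d = g (d 0) (d 1) (d 2)) (hg : ∀ a b c, 0 ≤ g a b c)
    (h₀ : ∀ a b c, g (a - 1) b c * g (a + 1) b c ≤ g a b c ^ 2)
    (h₁ : ∀ a b c, g a (b - 1) c * g a (b + 1) c ≤ g a b c ^ 2)
    (h₂ : ∀ a b c, g a b (c - 1) * g a b (c + 1) ≤ g a b c ^ 2) : IsLogConcave f := by
  refine ⟨fun d ↦ hf d ▸ hg _ _ _, fun j d ↦ ?_⟩
  simp only [hf, Finsupp.coe_sub, Finsupp.coe_add, Pi.sub_apply, Pi.add_apply, Finsupp.single_apply]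
  fin_cases j <;> simp [h₀, h₁, h₂]

def numeratorCoeff (a b c : ℤ) : ℤ :=
  if a = 0 ∧ c = 0 then (if b = 1 then 2 else if b = 0 ∨ b = 2 then 1 else 0)
  else if a = 1 ∧ b = 0 ∧ c = 1 then 1 else 0

lemma coeff_numerator (d : Fin 3 →₀ ℤ) :
    (1 + 2 * LX 3 1 1 + LX 3 1 1 ^ 2 + LX 3 0 1 * LX 3 2 1).coeff d =
      numeratorCoeff (d 0) (d 1) (d 2) := by
  rw [one_def, ofNat_def]
  simp only [LX, Lmon, Fin.isValue, single_mul_single, zero_add, mul_one, single_pow,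
    Finsupp.smul_single, Int.nsmul_eq_mul, Nat.cast_ofNat, one_pow, coeff_add, coeff_single,
    Finsupp.coe_add, Pi.add_apply, Finsupp.single_apply, Finsupp.ext_iff, Finsupp.coe_zero,
    Pi.zero_apply, Fin.forall_fin_succ, Fin.succ_zero_eq_one, Fin.succ_one_eq_two,
    IsEmpty.forall_iff, and_true, one_ne_zero, ↓reduceIte, Fin.reduceEq, add_zero, zero_ne_one,
    numeratorCoeff]
  split_ifs <;> omega

lemma isLogConcave_numerator :
    IsLogConcave (1 + 2 * LX 3 1 1 + LX 3 1 1 ^ 2 + LX 3 0 1 * LX 3 2 1) := by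
  refine isLogConcave_of_coeff_eq numeratorCoeff coeff_numerator ?_ ?_ ?_ ?_ <;>
    intros <;> unfold numeratorCoeff <;> split_ifs <;> omega

/-- The Laurent polynomial `(1 + 2*x2 + x2^2 + x1*x3) / (x1*x2*x3)` in `x1,x2,x3`
is log-concave. -/
theorem logConcave_A3_cluster_variable :
    IsLogConcave ((1 + 2 * LX 3 1 1 + (LX 3 1 1) ^ 2 + LX 3 0 1 * LX 3 2 1) *
      (LX 3 0 (-1) * LX 3 1 (-1) * LX 3 2 (-1))) := by
  have hden : LX 3 0 (-1) * LX 3 1 (-1) * LX 3 2 (-1) =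
      Lmon 3 (Finsupp.single 0 (-1) + Finsupp.single 1 (-1) + Finsupp.single 2 (-1)) := by
    simp only [LX, Lmon_mul_Lmon]
  rw [hden]
  exact isLogConcave_numerator.mul_Lmon _
end
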